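/- arXiv:1903.09739 — 2 statements merged into one kernel-verified Lean document; each statement's English description precedes it below -/
import Mathlib

section
/- For all s > 0, u > 0 and α > 2, ∫_0^∞ s/(s + (u + r)^{α/2}) dr = u · ℓ(s·u^{−α/2}, 2/α). -/
/-!
Put `p = α/2` and `y = s u^{-p}`. The substitutions `x = u + r` and then `x = u t` turn the
left side into `u ∫_1^∞ y/(y + t^p) dt`, so it suffices that `ℓ(y, 1/p)` is this tail, i.e.
that `∫_0^∞ y/(y + t^p) dt = y^{1/p}/sinc(1/p)`. Scaling `t` by `y^{1/p}` reduces this to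
`∫_0^∞ (1 + x^p)⁻¹ dx = π/(p sin(π/p))`, and the substitution `t = (1 + x^p)⁻¹` turns that
integral into `p⁻¹ B(1 - 1/p, 1/p) = p⁻¹ Γ(1 - 1/p) Γ(1/p)`, which Euler's reflection formula
evaluates.
-/

open MeasureTheory Real

noncomputable def sinc (z : ℝ) : ℝ := Real.sin (π * z) / (π * z)

noncomputable def ell (y z : ℝ) : ℝ :=
  y ^ z / _root_.sinc z - ∫ t in (0 : ℝ)..1, y / (y + t ^ (1 / z))

open Set

theorem integral_rpow_neg_mul_one_sub_rpow {b : ℝ} (hb0 : 0 < b) (hb1 : b < 1) :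
    ∫ x in (0 : ℝ)..1, x ^ (-b) * (1 - x) ^ (b - 1) = π / Real.sin (π * b) := by
  have hcast : Complex.betaIntegral (1 - b) b
      = ((∫ x in (0 : ℝ)..1, x ^ (-b) * (1 - x) ^ (b - 1) : ℝ) : ℂ) := by
    rw [Complex.betaIntegral, ← intervalIntegral.integral_ofReal]
    refine intervalIntegral.integral_congr fun x ⟨hx0, hx1⟩ => ?_
    simp only [zero_le_one, inf_of_le_left, sup_of_le_right] at hx0 hx1
    rw [Complex.ofReal_mul, Complex.ofReal_cpow hx0, Complex.ofReal_cpow (by linarith)]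
    push_cast
    ring_nf
  have hreflect : Complex.betaIntegral (1 - b) b = π / Complex.sin (π * b) := by
    have h := Complex.Gamma_mul_Gamma_eq_betaIntegral (s := 1 - b) (t := b)
      (by simpa using hb1) (by simpa using hb0)
    rw [sub_add_cancel, Complex.Gamma_one, one_mul, mul_comm] at h
    rw [← h, Complex.Gamma_mul_Gamma_one_sub]
  rw [hcast] at hreflect
  exact_mod_cast hreflect

section InvOneAddRpow

variable {p : ℝ}

theorem image_inv_one_add_rpow_Ioi (hp : 0 < p) :
    (fun x : ℝ => (1 + x ^ p)⁻¹) '' Ioi 0 = Ioo 0 1 := by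
  ext t
  constructor
  · rintro ⟨x, hx, rfl⟩
    have hxp : 0 < x ^ p := rpow_pos_of_pos hx p
    exact ⟨by positivity, inv_lt_one_of_one_lt₀ (by linarith)⟩
  · rintro ⟨ht0, ht1⟩
    have hpos : 0 < (1 - t) / t := div_pos (by linarith) ht0
    refine ⟨((1 - t) / t) ^ p⁻¹, rpow_pos_of_pos hpos _, ?_⟩
    dsimp only
    rw [rpow_inv_rpow hpos.le hp.ne']
    field_simp
    ring

theorem strictAntiOn_inv_one_add_rpow (hp : 0 < p) :
    StrictAntiOn (fun x : ℝ => (1 + x ^ p)⁻¹) (Ioi 0) := fun x hx y _ hxy => by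
  have hxp : 0 < x ^ p := rpow_pos_of_pos hx p
  have : x ^ p < y ^ p := rpow_lt_rpow hx.le hxy hp
  exact inv_strictAnti₀ (by positivity) (by linarith)

theorem hasDerivAt_inv_one_add_rpow {x : ℝ} (hx : 0 < x) :
    HasDerivAt (fun x : ℝ => (1 + x ^ p)⁻¹) (-(p * x ^ (p - 1)) / (1 + x ^ p) ^ 2) x := by
  have hxp : 0 < x ^ p := rpow_pos_of_pos hx p
  exact ((hasDerivAt_rpow_const (Or.inl hx.ne')).const_add 1).inv (by positivity)

/-- The Jacobian identity behind the substitution `t = (1 + x^p)⁻¹`, which turns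
`∫_0^∞ (1 + x^p)⁻¹ dx` into a beta integral. -/
theorem abs_deriv_mul_beta_integrand_inv_one_add_rpow (hp : 0 < p) {x : ℝ} (hx : 0 < x) :
    |-(p * x ^ (p - 1)) / (1 + x ^ p) ^ 2| *
        (p⁻¹ * ((1 + x ^ p)⁻¹ ^ (-p⁻¹) * (1 - (1 + x ^ p)⁻¹) ^ (p⁻¹ - 1)))
      = (1 + x ^ p)⁻¹ := by
  set f := (1 + x ^ p)⁻¹ with hf
  have hxp : 0 < x ^ p := rpow_pos_of_pos hx p
  have hf0 : 0 < f := by positivity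
  have hderiv : |-(p * x ^ (p - 1)) / (1 + x ^ p) ^ 2| = p * x ^ (p - 1) * f ^ 2 := by
    rw [abs_div, abs_neg, abs_of_pos (by positivity), abs_of_pos (by positivity), hf, inv_pow,
      div_eq_mul_inv]
  have hcompl : 1 - f = x ^ p * f := by
    rw [hf]; field_simp; ring
  have hcompl_rpow : (x ^ p * f) ^ (p⁻¹ - 1) = x ^ (1 - p) * f ^ (p⁻¹ - 1) := by
    rw [mul_rpow hxp.le hf0.le, ← rpow_mul hx.le, mul_sub, mul_inv_cancel₀ hp.ne', mul_one]
  have hf_rpow : f ^ (-p⁻¹) * f ^ (p⁻¹ - 1) = f⁻¹ := by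
    rw [← rpow_add hf0, show -p⁻¹ + (p⁻¹ - 1) = -1 by ring, rpow_neg_one]
  have hx_rpow : x ^ (p - 1) * x ^ (1 - p) = 1 := by
    rw [← rpow_add hx, sub_add_sub_cancel', sub_self, rpow_zero]
  rw [hderiv, hcompl, hcompl_rpow]
  calc p * x ^ (p - 1) * f ^ 2 * (p⁻¹ * (f ^ (-p⁻¹) * (x ^ (1 - p) * f ^ (p⁻¹ - 1))))
      = (p * p⁻¹) * (x ^ (p - 1) * x ^ (1 - p)) * f ^ 2 * (f ^ (-p⁻¹) * f ^ (p⁻¹ - 1)) := by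
        ring
    _ = f := by rw [hf_rpow, hx_rpow, mul_inv_cancel₀ hp.ne']; field_simp

theorem integral_Ioi_inv_one_add_rpow (hp : 1 < p) :
    ∫ x in Ioi (0 : ℝ), (1 + x ^ p)⁻¹ = π / (p * Real.sin (π / p)) := by
  have hp0 : 0 < p := by linarith
  have hsubst := integral_image_eq_integral_abs_deriv_smul measurableSet_Ioi
    (fun x hx => (hasDerivAt_inv_one_add_rpow hx).hasDerivWithinAt)
    (strictAntiOn_inv_one_add_rpow hp0).injOn
    (fun t => p⁻¹ * (t ^ (-p⁻¹) * (1 - t) ^ (p⁻¹ - 1)))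
  simp only [smul_eq_mul] at hsubst
  rw [image_inv_one_add_rpow_Ioi hp0,
    setIntegral_congr_fun measurableSet_Ioi
      fun x hx => abs_deriv_mul_beta_integrand_inv_one_add_rpow hp0 hx] at hsubst
  rw [← hsubst, ← integral_Ioc_eq_integral_Ioo, ← intervalIntegral.integral_of_le zero_le_one,
    intervalIntegral.integral_const_mul, integral_rpow_neg_mul_one_sub_rpow (inv_pos.2 hp0)
      (inv_lt_one_of_one_lt₀ hp)]
  field_simp

end InvOneAddRpow

section DivAddRpow

variable {s p : ℝ}

theorem continuousOn_div_add_rpow (hs : 0 < s) (hp : 0 < p) :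
    ContinuousOn (fun x : ℝ => s / (s + x ^ p)) (Ici 0) := by
  have hrpow : ContinuousOn (fun x : ℝ => x ^ p) (Ici 0) := fun x _ =>
    (continuousAt_rpow_const x p (.inr hp.le)).continuousWithinAt
  refine continuousOn_const.div (continuousOn_const.add hrpow) fun x hx => ?_
  have := rpow_nonneg (mem_Ici.mp hx) p
  positivity

theorem integrableOn_div_add_rpow_Ioi (hs : 0 < s) (hp : 1 < p) :
    IntegrableOn (fun x : ℝ => s / (s + x ^ p)) (Ioi 0) := by
  have hcont := continuousOn_div_add_rpow hs (zero_lt_one.trans hp)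
  rw [← Ioc_union_Ioi_eq_Ioi zero_le_one]
  refine .union ((hcont.mono Icc_subset_Ici_self).integrableOn_Icc.mono_set Ioc_subset_Icc_self) ?_
  refine ((integrableOn_Ioi_rpow_of_lt (neg_lt_neg hp) one_pos).const_mul s).mono'
    ((hcont.mono (Ioi_subset_Ici zero_le_one)).aestronglyMeasurable measurableSet_Ioi) ?_
  refine (ae_restrict_iff' measurableSet_Ioi).2 (.of_forall fun x (hx : 1 < x) => ?_)
  have hxp : 0 < x ^ p := rpow_pos_of_pos (zero_lt_one.trans hx) p
  rw [norm_of_nonneg (by positivity), rpow_neg (zero_le_one.trans hx.le), ← div_eq_mul_inv]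
  exact div_le_div_of_nonneg_left hs.le hxp (by linarith)

theorem integral_Ioi_div_add_rpow (hs : 0 < s) (hp : 1 < p) :
    ∫ x in Ioi (0 : ℝ), s / (s + x ^ p) = s ^ (1 / p) / _root_.sinc (1 / p) := by
  have hp0 : 0 < p := zero_lt_one.trans hp
  set c := s ^ (1 / p) with hc
  have hc0 : 0 < c := rpow_pos_of_pos hs _
  have hcp : c ^ p = s := by rw [hc, ← rpow_mul hs.le, one_div_mul_cancel hp0.ne', rpow_one]
  have hscale : ∀ x ∈ Ioi (0 : ℝ), s / (s + x ^ p) = (1 + (c⁻¹ * x) ^ p)⁻¹ := fun x hx => by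
    have hxp : 0 < x ^ p := rpow_pos_of_pos hx p
    rw [mul_rpow (inv_pos.2 hc0).le (le_of_lt hx), inv_rpow hc0.le, hcp]
    field_simp
  rw [setIntegral_congr_fun measurableSet_Ioi hscale,
    integral_comp_mul_left_Ioi (fun y => (1 + y ^ p)⁻¹) 0 (inv_pos.2 hc0), mul_zero, inv_inv,
    smul_eq_mul, integral_Ioi_inv_one_add_rpow hp, _root_.sinc]
  have hsin : 0 < Real.sin (π / p) :=
    sin_pos_of_pos_of_lt_pi (by positivity) (div_lt_self pi_pos hp)
  field_simp

theorem ell_one_div_eq_integral_Ioi_one (hs : 0 < s) (hp : 1 < p) :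
    ell s (1 / p) = ∫ x in Ioi (1 : ℝ), s / (s + x ^ p) := by
  have hint := integrableOn_div_add_rpow_Ioi hs hp
  rw [ell, one_div_one_div, ← integral_Ioi_div_add_rpow hs hp,
    intervalIntegral.integral_of_le zero_le_one, sub_eq_iff_eq_add',
    ← setIntegral_union (Ioc_disjoint_Ioi le_rfl) measurableSet_Ioi
      (hint.mono_set Ioc_subset_Ioi_self) (hint.mono_set (Ioi_subset_Ioi zero_le_one)),
    Ioc_union_Ioi_eq_Ioi zero_le_one]

end DivAddRpow

theorem integral_comp_add_left_Ioi {E : Type*} [NormedAddCommGroup E] [NormedSpace ℝ E]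
    (f : ℝ → E) (a b : ℝ) : ∫ x in Ioi a, f (b + x) = ∫ x in Ioi (b + a), f x := by
  have h := integral_image_eq_integral_abs_deriv_smul (measurableSet_Ioi (a := a))
    (fun x _ => ((hasDerivAt_id' x).const_add b).hasDerivWithinAt) (add_right_injective b).injOn f
  rw [image_const_add_Ioi] at h
  simpa using h.symm

/-- For all `s > 0`, `u > 0` and `α > 2`,
`∫_0^∞ s/(s + (u + r)^{α/2}) dr = u · ℓ(s·u^{−α/2}, 2/α)`. -/
theorem stmt_4 (s u α : ℝ) (hs : 0 < s) (hu : 0 < u) (hα : 2 < α) :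
    ∫ r in Set.Ioi (0 : ℝ), s / (s + (u + r) ^ (α / 2))
      = u * ell (s * u ^ (-(α / 2))) (2 / α) := by
  have hp : 1 < α / 2 := by linarith
  have hscale : ∀ x ∈ Ioi (1 : ℝ), s * u ^ (-(α / 2)) / (s * u ^ (-(α / 2)) + x ^ (α / 2))
      = s / (s + (u * x) ^ (α / 2)) := fun x hx => by
    have hup : 0 < u ^ (α / 2) := rpow_pos_of_pos hu _
    rw [mul_rpow hu.le (zero_le_one.trans (le_of_lt hx)), rpow_neg hu.le]
    field_simp
  rw [show 2 / α = 1 / (α / 2) from (one_div_div α 2).symm,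
    ell_one_div_eq_integral_Ioi_one (by positivity) hp,
    setIntegral_congr_fun measurableSet_Ioi hscale,
    ← smul_eq_mul, integral_comp_mul_left_Ioi' (fun x => s / (s + x ^ (α / 2))) 1 hu, mul_one,
    integral_comp_add_left_Ioi (fun x => s / (s + x ^ (α / 2))), add_zero]
end

section
/- Let K ≥ 1 be an integer, α > 2 and λ̃ > 0. For each k ∈ {1,…,K}, let Y_k be a Gamma(k, πλ̃) random variable and H_k an exponential random variable with rate 1, such that H_k is independent of Y_k and the K pairs (H_k, Y_k) are mutually independent. Then for every y ≥ 0, ℙ[∑_{k=1}^K H_k · Y_k^{−α/2} ≥ y] ≤ 1 − ∏_{k=1}^K (1 − 𝔼[exp(−(2k·y/(K(K+1))) · Y_k^{α/2})]). -/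
/-!
Write `y = ∑ t_k` with `t_k = 2 k y / (K (K + 1))`. If the sum of the `H_k Y_k^{-α/2}` reaches `y`,
then some term reaches its share `t_k`, so the event lies in the complement of
`⋂ k, {H_k Y_k^{-α/2} < t_k}`, whose probability factorises over the independent pairs.
Since `Y_k > 0` almost surely and `H_k ~ Exp(1)` is independent of `Y_k`, conditioning on `Y_k`
gives `ℙ[H_k < t_k Y_k^{α/2}] = 𝔼[1 - exp (-t_k Y_k^{α/2})]`.
-/

open MeasureTheory ProbabilityTheory Real Set

lemma ae_pos_gammaMeasure (a r : ℝ) : ∀ᵐ x ∂gammaMeasure a r, 0 < x := by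
  refine measure_mono_null (t := Iic 0) (fun x (hx : ¬0 < x) => not_lt.1 hx) ?_
  rw [gammaMeasure, withDensity_apply _ measurableSet_Iic,
    setLIntegral_congr Iio_ae_eq_Iic.symm]
  exact lintegral_gammaPDF_of_nonpos le_rfl

lemma expMeasure_one_Iio {v : ℝ} (hv : 0 ≤ v) :
    expMeasure 1 (Iio v) = ENNReal.ofReal (1 - exp (-v)) := by
  have : IsProbabilityMeasure (expMeasure 1) := isProbabilityMeasure_expMeasure one_pos
  have hatom : expMeasure 1 {v} = 0 :=
    withDensity_absolutelyContinuous _ _ (measure_singleton v)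
  have hcdf := cdf_expMeasure_eq one_pos v
  rw [cdf_eq_real, if_pos hv, one_mul] at hcdf
  rw [measure_congr (Iio_ae_eq_Iic' hatom), ← ofReal_measureReal, hcdf]

lemma measureReal_lt_eq_one_sub_integral_exp {Ω : Type*} [MeasurableSpace Ω] {μ : Measure Ω}
    [IsProbabilityMeasure μ] {H Z : Ω → ℝ} (hH : Measurable H) (hZ : Measurable Z)
    (hHlaw : μ.map H = expMeasure 1) (hind : IndepFun H Z μ) (hZnn : 0 ≤ᵐ[μ] Z) :
    μ.real {ω | H ω < Z ω} = 1 - ∫ ω, exp (-Z ω) ∂μ := by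
  have : IsProbabilityMeasure (expMeasure 1) := isProbabilityMeasure_expMeasure one_pos
  have hS : MeasurableSet {p : ℝ × ℝ | p.2 < p.1} := measurableSet_lt measurable_snd measurable_fst
  have hjoint : μ.map (fun ω => (Z ω, H ω)) = (μ.map Z).prod (expMeasure 1) := by
    rw [← hHlaw]
    exact (indepFun_iff_map_prod_eq_prod_map_map hZ.aemeasurable hH.aemeasurable).1 hind.symm
  have hlintegral : μ {ω | H ω < Z ω} = ∫⁻ ω, ENNReal.ofReal (1 - exp (-Z ω)) ∂μ := by
    calc μ {ω | H ω < Z ω} = ∫⁻ z, expMeasure 1 (Iio z) ∂(μ.map Z) := by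
          change μ ((fun ω => (Z ω, H ω)) ⁻¹' {p : ℝ × ℝ | p.2 < p.1}) = _
          rw [← Measure.map_apply (hZ.prodMk hH) hS, hjoint, Measure.prod_apply hS]
          rfl
      _ = ∫⁻ ω, expMeasure 1 (Iio (Z ω)) ∂μ :=
          lintegral_map (measurable_measure_prodMk_left hS) hZ
      _ = _ := lintegral_congr_ae (hZnn.mono fun ω hω => expMeasure_one_Iio hω)
  have hexp_le_one : ∀ᵐ ω ∂μ, exp (-Z ω) ≤ 1 :=
    hZnn.mono fun ω hω => exp_le_one_iff.2 (neg_nonpos.2 hω)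
  have hint : Integrable (fun ω => exp (-Z ω)) μ :=
    (integrable_const 1).mono' (by fun_prop) (hexp_le_one.mono fun ω hω => by
      rwa [norm_of_nonneg (exp_pos _).le])
  rw [measureReal_def, hlintegral, ← integral_eq_lintegral_of_nonneg_ae
    (hexp_le_one.mono fun ω hω => sub_nonneg.2 hω) (by fun_prop),
    integral_sub (integrable_const 1) hint, integral_const, probReal_univ, one_smul]

lemma measureReal_mul_rpow_neg_lt_eq {Ω : Type*} [MeasurableSpace Ω] {μ : Measure Ω}
    [IsProbabilityMeasure μ] {H Y : Ω → ℝ} (hH : Measurable H) (hY : Measurable Y)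
    (hHlaw : μ.map H = expMeasure 1) (hind : IndepFun H Y μ) (hYpos : ∀ᵐ ω ∂μ, 0 < Y ω)
    (c : ℝ) {t : ℝ} (ht : 0 ≤ t) :
    μ.real {ω | H ω * Y ω ^ (-c) < t} = 1 - ∫ ω, exp (-t * Y ω ^ c) ∂μ := by
  have hevent : {ω | H ω * Y ω ^ (-c) < t} =ᵐ[μ] {ω | H ω < t * Y ω ^ c} := by
    filter_upwards [hYpos] with ω hω
    change (H ω * Y ω ^ (-c) < t) = (H ω < t * Y ω ^ c)
    rw [eq_iff_iff, rpow_neg hω.le, ← div_eq_mul_inv, div_lt_iff₀ (rpow_pos_of_pos hω c)]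
  simp only [neg_mul]
  rw [measureReal_congr hevent]
  exact measureReal_lt_eq_one_sub_integral_exp hH (by fun_prop) hHlaw
    (hind.comp (ψ := fun x => t * x ^ c) measurable_id (by fun_prop))
    (hYpos.mono fun ω hω => mul_nonneg ht (rpow_pos_of_pos hω c).le)

lemma measureReal_le_sum_le_one_sub_prod {Ω ι : Type*} [MeasurableSpace Ω] {μ : Measure Ω}
    [IsProbabilityMeasure μ] [Fintype ι] [Nonempty ι] {X : ι → Ω → ℝ}
    (hX : ∀ i, Measurable (X i)) (hind : iIndepFun X μ) (t : ι → ℝ) :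
    μ.real {ω | ∑ i, t i ≤ ∑ i, X i ω} ≤ 1 - ∏ i, μ.real {ω | X i ω < t i} := by
  have hmeas : ∀ i, MeasurableSet {ω | X i ω < t i} :=
    fun i => measurableSet_lt (hX i) measurable_const
  have hsubset : {ω | ∑ i, t i ≤ ∑ i, X i ω} ⊆ (⋂ i, {ω | X i ω < t i})ᶜ := by
    intro ω (hω : ∑ i, t i ≤ ∑ i, X i ω) hall
    exact (Finset.sum_lt_sum_of_nonempty Finset.univ_nonempty
      fun i _ => mem_iInter.1 hall i).not_ge hω
  calc μ.real {ω | ∑ i, t i ≤ ∑ i, X i ω} ≤ μ.real (⋂ i, {ω | X i ω < t i})ᶜ :=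
        measureReal_mono hsubset
    _ = 1 - ∏ i, μ.real {ω | X i ω < t i} := by
        rw [probReal_compl_eq_one_sub (MeasurableSet.iInter hmeas), measureReal_def,
          hind.meas_iInter (s := fun i => {ω | X i ω < t i})
            fun i => ⟨Iio (t i), measurableSet_Iio, rfl⟩, ENNReal.toReal_prod]
        simp only [measureReal_def]

lemma sum_fin_natCast_add_one (K : ℕ) : ∑ k : Fin K, ((k : ℝ) + 1) = K * (K + 1) / 2 := by
  rw [Fin.sum_univ_eq_sum_range (fun i => (i : ℝ) + 1)]
  induction K with
  | zero => simp
  | succ n ih => rw [Finset.sum_range_succ, ih]; push_cast; ring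

theorem stmt_8_general {Ω : Type*} [MeasurableSpace Ω] (μ : Measure Ω) [IsProbabilityMeasure μ]
    (K : ℕ) (hK : 1 ≤ K) (α lam : ℝ)
    (Y H : Fin K → Ω → ℝ)
    (hYmeas : ∀ k, Measurable (Y k)) (hHmeas : ∀ k, Measurable (H k))
    (hYgamma : ∀ k : Fin K, μ.map (Y k) = gammaMeasure ((k : ℕ) + 1) (π * lam))
    (hHexp : ∀ k : Fin K, μ.map (H k) = expMeasure 1)
    (hHYindep : ∀ k : Fin K, IndepFun (H k) (Y k) μ)
    (hpairs : iIndepFun (fun k ω => (H k ω, Y k ω)) μ)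
    (y : ℝ) (hy : 0 ≤ y) :
    (μ {ω | y ≤ ∑ k : Fin K, H k ω * (Y k ω) ^ (-(α / 2))}).toReal
      ≤ 1 - ∏ k : Fin K,
          (1 - ∫ ω, Real.exp (-(2 * ((k : ℕ) + 1) * y / (K * (K + 1))) * (Y k ω) ^ (α / 2)) ∂μ)
      := by
  have : Nonempty (Fin K) := ⟨⟨0, hK⟩⟩
  set t : Fin K → ℝ := fun k => 2 * ((k : ℕ) + 1) * y / (K * (K + 1))
  have ht_nonneg : ∀ k, 0 ≤ t k := fun k => by positivity
  have ht_sum : ∑ k, t k = y := by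
    have hK' : (K : ℝ) * (K + 1) ≠ 0 := by positivity
    simp only [t, ← Finset.sum_div, ← Finset.sum_mul, ← Finset.mul_sum, sum_fin_natCast_add_one]
    field_simp
  have hindep : iIndepFun (fun k ω => H k ω * Y k ω ^ (-(α / 2))) μ :=
    hpairs.comp (fun _ p => p.1 * p.2 ^ (-(α / 2))) fun _ => by fun_prop
  have hYpos : ∀ k, ∀ᵐ ω ∂μ, 0 < Y k ω := fun k =>
    ae_of_ae_map (hYmeas k).aemeasurable ((hYgamma k).symm ▸ ae_pos_gammaMeasure _ _)
  calc (μ {ω | y ≤ ∑ k, H k ω * Y k ω ^ (-(α / 2))}).toReal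
      = μ.real {ω | ∑ k, t k ≤ ∑ k, H k ω * Y k ω ^ (-(α / 2))} := by rw [ht_sum]; rfl
    _ ≤ 1 - ∏ k, μ.real {ω | H k ω * Y k ω ^ (-(α / 2)) < t k} :=
        measureReal_le_sum_le_one_sub_prod (fun k => by fun_prop) hindep t
    _ = _ := by
        congr 1
        exact Finset.prod_congr rfl fun k _ => measureReal_mul_rpow_neg_lt_eq (hHmeas k) (hYmeas k)
          (hHexp k) (hHYindep k) (hYpos k) (α / 2) (ht_nonneg k)

/-- Upper bound on the tail of the `K`-th truncated shot signal process
(Theorem 1(iii), Eqn. (11) of the paper): if `Y k ~ Gamma(k, πλ̃)`, `H k ~ Exp(1)`,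
`H k` is independent of `Y k` and the `K` pairs `(H k, Y k)` are mutually independent,
then for every `y ≥ 0`,
`ℙ[∑ H k Y k^{−α/2} ≥ y] ≤ 1 − ∏ (1 − 𝔼[exp(−(2k y/(K(K+1))) Y k^{α/2})])`. -/
theorem stmt_8 {Ω : Type*} [MeasurableSpace Ω] (μ : Measure Ω) [IsProbabilityMeasure μ]
    (K : ℕ) (hK : 1 ≤ K) (α lam : ℝ) (hα : 2 < α) (hlam : 0 < lam)
    (Y H : Fin K → Ω → ℝ)
    (hYmeas : ∀ k, Measurable (Y k)) (hHmeas : ∀ k, Measurable (H k))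
    (hYgamma : ∀ k : Fin K, μ.map (Y k) = gammaMeasure ((k : ℕ) + 1) (π * lam))
    (hHexp : ∀ k : Fin K, μ.map (H k) = expMeasure 1)
    (hHYindep : ∀ k : Fin K, IndepFun (H k) (Y k) μ)
    (hpairs : iIndepFun (fun k ω => (H k ω, Y k ω)) μ)
    (y : ℝ) (hy : 0 ≤ y) :
    (μ {ω | y ≤ ∑ k : Fin K, H k ω * (Y k ω) ^ (-(α / 2))}).toReal
      ≤ 1 - ∏ k : Fin K,
          (1 - ∫ ω, Real.exp (-(2 * ((k : ℕ) + 1) * y / (K * (K + 1))) * (Y k ω) ^ (α / 2)) ∂μ) :=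
  stmt_8_general μ K hK α lam Y H hYmeas hHmeas hYgamma hHexp hHYindep hpairs y hy
end
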